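/- arXiv:1205.0641 — 6 statements merged into one kernel-verified Lean document; each statement's English description precedes it below -/
import Mathlib

section
/- Let X_1,…,X_N ∈ M_d span a linear subspace S = span{X_i} ⊆ M_d, and let T : S → M_{d'} be a linear map. Then T is completely positive if and only if for all matrices H_1,…,H_N ∈ M_{d'}, the implication holds: if Σ_{i=1}^N X_i ⊗ H_i is positive semidefinite, then Σ_{i=1}^N tr[T(X_i)^T H_i] ≥ 0 (in particular this sum is real). -/
/-!
Write a vector of `ℂ^{d'} ⊗ ℂ^n` as `vec V` for an `n × d'` matrix `V`. The quadratic form of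
`Σ A_i ⊗ K_i` at `vec V` is `Σ tr[A_iᵀ (Vᴴ K_i V)]`, and `Σ X_i ⊗ Vᴴ K_i V` is the congruence of
`Σ X_i ⊗ K_i` by `1 ⊗ V`. So the trace condition for `H_i = Vᴴ K_i V` is exactly nonnegativity
of `Σ T(X_i) ⊗ K_i` at `vec V`; conversely `Σ tr[T(X_i)ᵀ H_i]` is the quadratic form of
`Σ T(X_i) ⊗ H_i` at the maximally entangled vector `vec 1`. A general family in `S` is first
expanded in the `X_i`, which moves the coefficients onto the `K_j`.
-/

open scoped Kronecker ComplexOrder Matrix.Norms.L2Operator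
open Matrix Filter Classical

/-- `M_d`, the algebra of `d × d` complex matrices. -/
abbrev Mat (d : ℕ) := Matrix (Fin d) (Fin d) ℂ

/-- A linear map `T : S → M_{d'}` on a subspace `S ⊆ M_d` is completely positive if for
every `n` and every positive semidefinite `P = Σ_j X_j ⊗ K_j` with `X_j ∈ S`, `K_j ∈ M_n`,
the matrix `(T ⊗ id_n)(P) = Σ_j T(X_j) ⊗ K_j` is positive semidefinite. -/
def IsCPOn {d d' : ℕ} (S : Submodule ℂ (Mat d)) (T : S →ₗ[ℂ] Mat d') : Prop :=
  ∀ (n m : ℕ) (X : Fin m → S) (K : Fin m → Matrix (Fin n) (Fin n) ℂ),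
    (∑ j, (X j : Mat d) ⊗ₖ K j).PosSemidef →
    (∑ j, (T (X j)) ⊗ₖ K j).PosSemidef

/-- Complete positivity for a linear map defined on all of `M_d`. -/
def IsCP {d d' : ℕ} (T : Mat d →ₗ[ℂ] Mat d') : Prop :=
  ∀ (n m : ℕ) (X : Fin m → Mat d) (K : Fin m → Matrix (Fin n) (Fin n) ℂ),
    (∑ j, X j ⊗ₖ K j).PosSemidef →
    (∑ j, T (X j) ⊗ₖ K j).PosSemidef

namespace Matrix

variable {ι m n p R : Type*} [Fintype ι]

theorem sum_sum_smul_kronecker {κ l q : Type*} [Fintype κ] [CommSemiring R]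
    (c : κ → ι → R) (A : ι → Matrix m l R) (K : κ → Matrix n q R) :
    ∑ j, (∑ i, c j i • A i) ⊗ₖ K j = ∑ i, A i ⊗ₖ ∑ j, c j i • K j := by
  ext ⟨a, b⟩ ⟨a', b'⟩
  simp only [sum_apply, kroneckerMap_apply, smul_apply, smul_eq_mul, Finset.sum_mul,
    Finset.mul_sum]
  rw [Finset.sum_comm]
  exact Finset.sum_congr rfl fun i _ => Finset.sum_congr rfl fun j _ => by ring

variable [Fintype m] [Fintype n]

theorem posSemidef_of_dotProduct_mulVec_nonneg_complex [DecidableEq m] {M : Matrix m m ℂ}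
    (h : ∀ x, 0 ≤ star x ⬝ᵥ (M *ᵥ x)) : M.PosSemidef := by
  rw [← isPositive_toEuclideanLin_iff, LinearMap.isPositive_iff_complex]
  intro x
  obtain ⟨r, hr, hxr⟩ := RCLike.nonneg_iff_exists_ofReal.mp (h x.ofLp)
  have hinner : inner ℂ (M.toEuclideanLin x) x = r := by
    rw [← inner_conj_symm, EuclideanSpace.inner_eq_star_dotProduct]
    simp [dotProduct_comm _ (star x.ofLp), ← hxr]
  simp [hinner, hr]

theorem star_vec_dotProduct_kronecker_mulVec_vec [CommSemiring R] [StarRing R]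
    (A : Matrix m m R) (B : Matrix n n R) (V : Matrix n m R) :
    star (vec V) ⬝ᵥ ((A ⊗ₖ B) *ᵥ vec V) = (Aᵀ * (Vᴴ * B * V)).trace := by
  rw [kronecker_mulVec_vec, star_vec_dotProduct_vec, ← Matrix.mul_assoc, ← Matrix.mul_assoc,
    trace_mul_comm]

theorem conjTranspose_one_kronecker_mul_kronecker_mul [CommSemiring R] [StarRing R]
    [DecidableEq m] (A : Matrix m m R) (K : Matrix n n R) (V : Matrix n p R) :
    ((1 : Matrix m m R) ⊗ₖ V)ᴴ * (A ⊗ₖ K) * ((1 : Matrix m m R) ⊗ₖ V) = A ⊗ₖ (Vᴴ * K * V) := by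
  rw [conjTranspose_kronecker, conjTranspose_one, ← mul_kronecker_mul, ← mul_kronecker_mul,
    Matrix.one_mul, Matrix.mul_one]

theorem trace_nonneg_of_posSemidef_sum_kronecker [DecidableEq n] (B H : ι → Matrix n n ℂ)
    (h : (∑ i, B i ⊗ₖ H i).PosSemidef) : 0 ≤ ∑ i, ((B i)ᵀ * H i).trace := by
  simpa [sum_mulVec, dotProduct_sum, star_vec_dotProduct_kronecker_mulVec_vec] using
    h.dotProduct_mulVec_nonneg (vec 1)

theorem posSemidef_sum_kronecker_of_trace_nonneg [Fintype p] [DecidableEq m] [DecidableEq p]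
    (A : ι → Matrix m m ℂ) (B : ι → Matrix p p ℂ)
    (h : ∀ H : ι → Matrix p p ℂ, (∑ i, A i ⊗ₖ H i).PosSemidef → 0 ≤ ∑ i, ((B i)ᵀ * H i).trace)
    (K : ι → Matrix n n ℂ) (hK : (∑ i, A i ⊗ₖ K i).PosSemidef) :
    (∑ i, B i ⊗ₖ K i).PosSemidef := by
  refine posSemidef_of_dotProduct_mulVec_nonneg_complex fun v => ?_
  obtain ⟨V, rfl⟩ := vec_bijective.surjective v
  have hcongr : (∑ i, A i ⊗ₖ (Vᴴ * K i * V)).PosSemidef := by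
    simpa [Matrix.sum_mul, Matrix.mul_sum, conjTranspose_one_kronecker_mul_kronecker_mul] using
      hK.conjTranspose_mul_mul_same ((1 : Matrix m m ℂ) ⊗ₖ V)
  simpa [sum_mulVec, dotProduct_sum, star_vec_dotProduct_kronecker_mulVec_vec] using
    h _ hcongr

end Matrix

/-- `T` is completely positive on `S = span{X_i}` iff for all `H_i`,
`Σ_i X_i ⊗ H_i ⪰ 0` implies `Σ_i tr[T(X_i)ᵀ H_i] ≥ 0` (in particular the sum is real,
expressed via the complex order). -/
theorem stmt1 {d d' N : ℕ} (X : Fin N → Mat d)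
    (S : Submodule ℂ (Mat d)) (hS : S = Submodule.span ℂ (Set.range X))
    (hmem : ∀ i, X i ∈ S)
    (T : S →ₗ[ℂ] Mat d') :
    IsCPOn S T ↔
      ∀ H : Fin N → Mat d',
        (∑ i, X i ⊗ₖ H i).PosSemidef →
        0 ≤ ∑ i, ((T ⟨X i, hmem i⟩)ᵀ * H i).trace := by
  constructor
  · intro hCP H hH
    exact trace_nonneg_of_posSemidef_sum_kronecker _ _ (hCP d' N (fun i => ⟨X i, hmem i⟩) H hH)
  · intro hdual n m Y K hY
    have hspan : ∀ y : S, ∃ c : Fin N → ℂ, y = ∑ i, c i • (⟨X i, hmem i⟩ : S) := by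
      intro y
      have hy : (y : Mat d) ∈ Submodule.span ℂ (Set.range X) := hS ▸ y.2
      obtain ⟨c, hc⟩ := (Submodule.mem_span_range_iff_exists_fun ℂ).mp hy
      exact ⟨c, Subtype.ext (by simp [hc])⟩
    choose c hc using fun j => hspan (Y j)
    have hTY : ∀ j, T (Y j) = ∑ i, c j i • T ⟨X i, hmem i⟩ := fun j => by
      simp only [hc j, map_sum, map_smul]
    have hY' : ∀ j, (Y j : Mat d) = ∑ i, c j i • X i := by simp [hc]
    simp only [hTY, hY', sum_sum_smul_kronecker] at hY ⊢
    exact posSemidef_sum_kronecker_of_trace_nonneg _ _ hdual _ hY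
end

section
/- Let T : S → M_{d'} be a linear map on a linear subspace S ⊂ M_d. Assume T_k : M_d → M_{d'} is a sequence of completely positive linear maps with T_k(X) → T(X) (in norm) as k → ∞ for every X ∈ S, but that no completely positive linear map T̃ : M_d → M_{d'} satisfies T̃(X) = T(X) for all X ∈ S. Then ‖T_k^*(I)‖ → ∞ as k → ∞, where T_k^* : M_{d'} → M_d is the dual map of T_k and I the identity matrix. -/
open scoped Kronecker ComplexOrder Matrix.Norms.L2Operator
open Matrix Filter Classical

/-!
If `‖T_k^*(I)‖` stayed bounded along a subsequence, so would `‖T_k(I)‖ ≤ tr T_k(I) = tr T_k^*(I)`.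
A positive map between C⋆-algebras satisfies `‖T X‖ ≤ 4 ‖T 1‖ ‖X‖` (split `X` into four positive
parts), so these `T_k` lie in a bounded set of operators on a finite-dimensional space. A further
subsequence converges; its limit is completely positive because the positive semidefinite cone is
closed, and it agrees with `T` on `S`, contradicting the assumption that no such extension exists.
-/

open scoped MatrixOrder

namespace PositiveLinearMap

lemma norm_apply_le {A B : Type*} [CStarAlgebra A] [PartialOrder A] [StarOrderedRing A]
    [CStarAlgebra B] [PartialOrder B] [StarOrderedRing B] (f : A →ₚ[ℂ] B) (x : A) :
    ‖f x‖ ≤ 4 * ‖f 1‖ * ‖x‖ := by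
  obtain ⟨y, hy_nonneg, hy_norm, hx⟩ := CStarAlgebra.exists_sum_four_nonneg x
  calc ‖f x‖ ≤ ∑ i, ‖f (y i)‖ := by
        rw [hx, map_sum]
        refine (norm_sum_le _ _).trans_eq ?_
        simp [map_smul, norm_smul]
    _ ≤ ∑ _i : Fin 4, ‖f 1‖ * ‖x‖ := by
        gcongr with i
        exact (norm_apply_le_of_nonneg f _ (hy_nonneg i)).trans (by gcongr; exact hy_norm i)
    _ = 4 * ‖f 1‖ * ‖x‖ := by simp [mul_assoc]

end PositiveLinearMap

namespace Matrix

variable {ι : Type*} [Fintype ι]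

lemma exists_norm_trace_le : ∃ c : ℝ, 0 ≤ c ∧ ∀ A : Matrix ι ι ℂ, ‖A.trace‖ ≤ c * ‖A‖ :=
  let tr := (traceLinearMap ι ℂ ℂ).toContinuousLinearMap
  ⟨‖tr‖, norm_nonneg _, tr.le_opNorm⟩

variable [DecidableEq ι]

lemma isClosed_setOf_posSemidef : IsClosed {A : Matrix ι ι ℂ | A.PosSemidef} := by
  simpa only [Set.Ici, nonneg_iff_posSemidef] using isClosed_Ici (a := (0 : Matrix ι ι ℂ))

lemma PosSemidef.norm_le_re_trace {Q : Matrix ι ι ℂ} (hQ : Q.PosSemidef) : ‖Q‖ ≤ Q.trace.re := by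
  have htr : Q.trace.re = ∑ i, hQ.1.eigenvalues i := by
    simp [hQ.1.trace_eq_sum_eigenvalues, Complex.re_sum]
  have htr0 : 0 ≤ Q.trace.re := htr ▸ Finset.sum_nonneg fun i _ => hQ.eigenvalues_nonneg i
  rw [CStarAlgebra.norm_le_iff_le_algebraMap _ htr0 (nonneg_iff_posSemidef.mpr hQ),
    le_algebraMap_iff_spectrum_le hQ.1.isSelfAdjoint]
  intro x hx
  obtain ⟨i, rfl⟩ := hQ.1.spectrum_real_eq_range_eigenvalues ▸ hx
  exact htr ▸ Finset.single_le_sum (fun j _ => hQ.eigenvalues_nonneg j) (Finset.mem_univ i)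

end Matrix

namespace IsCP

variable {d d' : ℕ}

lemma posSemidef_map {T : Mat d →ₗ[ℂ] Mat d'} (hT : IsCP T) {P : Mat d} (hP : P.PosSemidef) :
    (T P).PosSemidef := by
  have h := hT 1 1 (fun _ => P) (fun _ => 1) (by simpa using hP.kronecker PosSemidef.one)
  convert h.submatrix (fun i => (i, (0 : Fin 1))) using 1
  ext i j
  simp

lemma norm_apply_le {T : Mat d →ₗ[ℂ] Mat d'} (hT : IsCP T) (X : Mat d) :
    ‖T X‖ ≤ 4 * ‖T 1‖ * ‖X‖ :=
  (PositiveLinearMap.mk₀ T fun _ hP =>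
    nonneg_iff_posSemidef.mpr (hT.posSemidef_map (nonneg_iff_posSemidef.mp hP))).norm_apply_le X

lemma norm_map_one_le {T : Mat d →ₗ[ℂ] Mat d'} {T' : Mat d' →ₗ[ℂ] Mat d} (hT : IsCP T)
    (hdual : ∀ X Y, (Yᴴ * T X).trace = ((T' Y)ᴴ * X).trace) {c : ℝ}
    (hc : ∀ A : Mat d, ‖A.trace‖ ≤ c * ‖A‖) : ‖T 1‖ ≤ c * ‖T' 1‖ :=
  calc ‖T 1‖ ≤ (T 1).trace.re := (hT.posSemidef_map PosSemidef.one).norm_le_re_trace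
    _ ≤ ‖(T 1).trace‖ := Complex.re_le_norm _
    _ = ‖(T' 1).trace‖ := by
        simpa [trace_conjTranspose] using congrArg norm (hdual 1 1)
    _ ≤ c * ‖T' 1‖ := hc _

lemma of_tendsto {T : ℕ → Mat d →ₗ[ℂ] Mat d'} {L : Mat d →ₗ[ℂ] Mat d'} (hT : ∀ k, IsCP (T k))
    (hL : ∀ X, Tendsto (fun k => T k X) atTop (nhds (L X))) : IsCP L := by
  intro n m X K hP
  have hkron (K : Matrix (Fin n) (Fin n) ℂ) : Continuous fun A : Mat d' => A ⊗ₖ K :=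
    continuous_matrix fun p q => (continuous_id.matrix_elem p.1 q.1).mul continuous_const
  exact isClosed_setOf_posSemidef.mem_of_tendsto
    (tendsto_finsetSum _ fun j _ => ((hkron (K j)).tendsto _).comp (hL (X j)))
    (Eventually.of_forall fun k => hT k n m X K hP)

lemma exists_subseq_tendsto {T : ℕ → Mat d →ₗ[ℂ] Mat d'} (hT : ∀ k, IsCP (T k)) {C : ℝ}
    (hC : ∀ k, ‖T k 1‖ ≤ C) :
    ∃ L : Mat d →ₗ[ℂ] Mat d', IsCP L ∧ ∃ ψ : ℕ → ℕ, StrictMono ψ ∧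
      ∀ X, Tendsto (fun n => T (ψ n) X) atTop (nhds (L X)) := by
  let U : ℕ → Mat d →L[ℂ] Mat d' := fun k => LinearMap.toContinuousLinearMap (T k)
  have hU : ∀ k, U k ∈ Metric.closedBall 0 (4 * C) := fun k => by
    rw [mem_closedBall_zero_iff]
    refine ContinuousLinearMap.opNorm_le_bound _ (by linarith [(norm_nonneg _).trans (hC 0)])
      fun X => ((hT k).norm_apply_le X).trans ?_
    gcongr
    exact hC k
  have := FiniteDimensional.proper_rclike ℂ (Mat d →L[ℂ] Mat d')
  obtain ⟨L, -, ψ, hψ, hUL⟩ := tendsto_subseq_of_bounded Metric.isBounded_closedBall hU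
  have hL : ∀ X, Tendsto (fun n => T (ψ n) X) atTop (nhds (L X)) := fun X =>
    ((ContinuousLinearMap.apply ℂ _ X).continuous.tendsto L).comp hUL
  exact ⟨L, of_tendsto (fun n => hT (ψ n)) hL, ψ, hψ, hL⟩

end IsCP

/-- If completely positive maps `T_k` converge pointwise on `S` to `T`, but `T` has no
completely positive extension to `M_d`, then `‖T_k^*(I)‖ → ∞`. -/
theorem stmt5 {d d' : ℕ} (S : Submodule ℂ (Mat d)) (T : S →ₗ[ℂ] Mat d')
    (Tk : ℕ → (Mat d →ₗ[ℂ] Mat d'))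
    (hCP : ∀ k, IsCP (Tk k))
    (hconv : ∀ X (hX : X ∈ S), Tendsto (fun k => Tk k X) atTop (nhds (T ⟨X, hX⟩)))
    (hnoext : ¬ ∃ T' : Mat d →ₗ[ℂ] Mat d', IsCP T' ∧ ∀ X (hX : X ∈ S), T' X = T ⟨X, hX⟩)
    (Tk' : ℕ → (Mat d' →ₗ[ℂ] Mat d))
    (hdual : ∀ (k : ℕ) (Xm : Mat d) (Y : Mat d'),
      (Yᴴ * Tk k Xm).trace = ((Tk' k Y)ᴴ * Xm).trace) :
    Tendsto (fun k => ‖Tk' k (1 : Mat d')‖) atTop atTop := by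
  by_contra hnot
  obtain ⟨C, hC⟩ : ∃ C, ∃ᶠ k in atTop, ‖Tk' k 1‖ < C := by
    simpa [tendsto_atTop, Filter.frequently_atTop] using hnot
  obtain ⟨φ, hφ, hφC⟩ := extraction_of_frequently_atTop hC
  obtain ⟨c, hc0, hc⟩ := exists_norm_trace_le (ι := Fin d)
  have hbound (n : ℕ) : ‖Tk (φ n) 1‖ ≤ c * C :=
    ((hCP (φ n)).norm_map_one_le (hdual (φ n)) hc).trans (by gcongr; exact (hφC n).le)
  obtain ⟨L, hLcp, ψ, hψ, hL⟩ := IsCP.exists_subseq_tendsto (fun n => hCP (φ n)) hbound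
  exact hnoext ⟨L, hLcp, fun X hX =>
    tendsto_nhds_unique (hL X) ((hconv X hX).comp (hφ.comp hψ).tendsto_atTop)⟩
end

section
/- Let S ⊆ M_d be a Hermitian subspace containing a positive definite matrix P, and let T : S → M_{d'} be a completely positive linear map. Then there exists a completely positive linear map T̃ : M_d → M_{d'} with T̃(X) = T(X) for all X ∈ S. -/
open scoped Kronecker ComplexOrder Matrix.Norms.L2Operator
open Matrix Filter Classical

/-!
Amplify to `M_d ⊗ M_{d'}`: the block subspace `S ⊗ M_{d'}` is self-adjoint and contains the
positive definite `P ⊗ 1`, and complete positivity of `T` at level `d'` makes the Choi functional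
`M ↦ ⟨Ω, (T ⊗ id) M Ω⟩`, `Ω = ∑ₖ eₖ ⊗ eₖ`, positive on it. Krein's extension theorem extends it
to a positive functional `ψ` on all of `M_d ⊗ M_{d'}`, and `X ↦ (ψ (X ⊗ Eₖₗ))ₖₗ` extends `T`.
This map is completely positive because its amplified quadratic form at `vec W` is
`ψ ((1 ⊗ W)ᴴ M (1 ⊗ W))`.
-/

open scoped MatrixOrder ComplexStarModule

section StarSubmodule

variable {A : Type*} [AddCommGroup A] [Module ℂ A] [StarAddMonoid A] [StarModule ℂ A]
  {V : Submodule ℂ A}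

theorem realPart_mem (hV : ∀ x ∈ V, star x ∈ V) {x : A} (hx : x ∈ V) : (ℜ x : A) ∈ V := by
  rw [realPart_apply_coe]
  exact V.smul_of_tower_mem _ (V.add_mem hx (hV x hx))

theorem imaginaryPart_mem (hV : ∀ x ∈ V, star x ∈ V) {x : A} (hx : x ∈ V) : (ℑ x : A) ∈ V := by
  rw [imaginaryPart_apply_coe]
  exact V.smul_mem _ (V.smul_of_tower_mem _ (V.sub_mem hx (hV x hx)))

end StarSubmodule

section PositiveExtension

variable {A : Type*} [CStarAlgebra A] [PartialOrder A] [StarOrderedRing A]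

theorem IsStrictlyPositive.exists_nonneg_smul_add {a b : A} (ha : IsStrictlyPositive a)
    (hb : IsSelfAdjoint b) : ∃ c : ℝ, 0 ≤ c • a + b := by
  nontriviality A
  obtain ⟨r, hr, hra⟩ : ∃ r > 0, algebraMap ℝ A r ≤ a :=
    (CFC.exists_pos_algebraMap_le_iff ha.isSelfAdjoint).2 fun x hx ↦ ha.spectrum_pos hx
  refine ⟨‖b‖ / r, ?_⟩
  have hnorm : algebraMap ℝ A ‖b‖ ≤ (‖b‖ / r) • a :=
    calc algebraMap ℝ A ‖b‖ = (‖b‖ / r) • algebraMap ℝ A r := by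
          simp only [Algebra.algebraMap_eq_smul_one, smul_smul, div_mul_cancel₀ _ hr.ne']
      _ ≤ (‖b‖ / r) • a := smul_le_smul_of_nonneg_left hra (by positivity)
  calc (0 : A) = algebraMap ℝ A ‖b‖ + -algebraMap ℝ A ‖b‖ := (add_neg_cancel _).symm
    _ ≤ (‖b‖ / r) • a + b := add_le_add hnorm hb.neg_algebraMap_norm_le_self

variable {V : Submodule ℂ A} {f : A →ₗ[ℂ] ℂ} {a₀ : A}

theorem im_apply_eq_zero_of_isSelfAdjoint (ha₀ : IsStrictlyPositive a₀) (ha₀V : a₀ ∈ V)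
    (hf : ∀ x ∈ V, 0 ≤ x → 0 ≤ f x) {b : A} (hb : IsSelfAdjoint b) (hbV : b ∈ V) :
    (f b).im = 0 := by
  obtain ⟨c, hc⟩ := ha₀.exists_nonneg_smul_add hb
  have h₁ := (Complex.nonneg_iff.mp (hf _ (V.add_mem (V.smul_of_tower_mem c ha₀V) hbV) hc)).2
  have h₀ := (Complex.nonneg_iff.mp (hf a₀ ha₀V ha₀.nonneg)).2
  rw [map_add, LinearMap.map_smul_of_tower] at h₁
  simp only [Complex.add_im, Complex.smul_im, ← h₀, smul_zero, zero_add] at h₁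
  exact h₁.symm

theorem re_apply_realPart (hV : ∀ x ∈ V, star x ∈ V) (ha₀ : IsStrictlyPositive a₀)
    (ha₀V : a₀ ∈ V) (hf : ∀ x ∈ V, 0 ≤ x → 0 ≤ f x) {x : A} (hx : x ∈ V) :
    (f (ℜ x)).re = (f x).re := by
  have him := im_apply_eq_zero_of_isSelfAdjoint ha₀ ha₀V hf (ℑ x).2 (imaginaryPart_mem hV hx)
  conv_rhs => rw [← realPart_add_I_smul_imaginaryPart x]
  simp [him]

/-- Krein's extension theorem: `a₀` is an order unit for `V`, so the M. Riesz extension theorem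
applies to `re ∘ f` on the self-adjoint part of `V`. -/
theorem exists_nonneg_extension (hV : ∀ x ∈ V, star x ∈ V) (ha₀ : IsStrictlyPositive a₀)
    (ha₀V : a₀ ∈ V) (hf : ∀ x ∈ V, 0 ≤ x → 0 ≤ f x) :
    ∃ φ : A →ₗ[ℂ] ℂ, (∀ x ∈ V, φ x = f x) ∧ ∀ x, 0 ≤ x → 0 ≤ φ x := by
  let ι : selfAdjoint A →ₗ[ℝ] A := (selfAdjoint.submodule ℝ A).subtype
  let D : Submodule ℝ (selfAdjoint A) := (V.restrictScalars ℝ).comap ι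
  obtain ⟨g, hgf, hg⟩ := riesz_extension ((PointedCone.positive ℝ A).comap ι)
    ⟨D, Complex.reLm ∘ₗ f.restrictScalars ℝ ∘ₗ ι ∘ₗ D.subtype⟩
    (fun x hx => (Complex.nonneg_iff.mp (hf _ x.2 hx)).1)
    (fun y => by
      obtain ⟨c, hc⟩ := ha₀.exists_nonneg_smul_add y.2
      exact ⟨⟨c • (⟨a₀, ha₀.isSelfAdjoint⟩ : selfAdjoint A), V.smul_of_tower_mem c ha₀V⟩, hc⟩)
  have hre (x : A) (hx : x ∈ V) : g (ℜ x) = (f x).re :=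
    (hgf ⟨ℜ x, realPart_mem hV hx⟩).trans (re_apply_realPart hV ha₀ ha₀V hf hx)
  refine ⟨Module.Dual.extendRCLike (g ∘ₗ realPart), fun x hx => ?_, fun x hx => ?_⟩
  · apply Complex.ext
    · simpa [Module.Dual.extendRCLike_apply] using hre x hx
    · simpa [Module.Dual.extendRCLike_apply] using hre _ (V.smul_mem Complex.I hx)
  · have hsa := IsSelfAdjoint.of_nonneg hx
    have hℜ : ℜ x = ⟨x, hsa⟩ := Subtype.ext hsa.coe_realPart
    refine Complex.nonneg_iff.mpr ⟨?_, ?_⟩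
    · simpa [Module.Dual.extendRCLike_apply, hℜ] using hg ⟨x, hsa⟩ hx
    · simp [Module.Dual.extendRCLike_apply, hsa.imaginaryPart]

end PositiveExtension

section BlockMatrix

variable {R m m' n : Type*}

theorem Matrix.submatrix_kronecker [CommMagma R] (X : Matrix m m R) (K : Matrix n n R) (a b : n) :
    (X ⊗ₖ K).submatrix (·, a) (·, b) = K a b • X := by
  ext i j; simp [mul_comm]

theorem Matrix.sum_kronecker_single_submatrix [Semiring R] [Fintype n] [DecidableEq n]
    (M : Matrix (m × n) (m × n) R) :
    ∑ k, ∑ l, M.submatrix (·, k) (·, l) ⊗ₖ single k l 1 = M := by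
  ext ⟨i, a⟩ ⟨j, b⟩
  simp [Matrix.sum_apply, single_apply, ite_and]

variable [CommSemiring R]

def blockSubmodule (S : Submodule R (Matrix m m R)) (n : Type*) :
    Submodule R (Matrix (m × n) (m × n) R) where
  carrier := {M | ∀ k l, M.submatrix (·, k) (·, l) ∈ S}
  add_mem' hM hN k l := by rw [submatrix_add]; exact S.add_mem (hM k l) (hN k l)
  zero_mem' k l := by rw [submatrix_zero]; exact S.zero_mem
  smul_mem' c M hM k l := by rw [submatrix_smul]; exact S.smul_mem c (hM k l)

theorem kronecker_mem_blockSubmodule {S : Submodule R (Matrix m m R)} {X : Matrix m m R}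
    (hX : X ∈ S) (K : Matrix n n R) : X ⊗ₖ K ∈ blockSubmodule S n := fun a b => by
  rw [submatrix_kronecker]; exact S.smul_mem _ hX

theorem conjTranspose_mem_blockSubmodule [StarRing R] {S : Submodule R (Matrix m m R)}
    (hS : ∀ X ∈ S, Xᴴ ∈ S) {M : Matrix (m × n) (m × n) R} (hM : M ∈ blockSubmodule S n) :
    Mᴴ ∈ blockSubmodule S n := fun k l => by
  rw [← conjTranspose_submatrix]; exact hS _ (hM l k)

/-- The amplification `T ⊗ id_n`; the `n`-coordinate of an index selects the block. -/
def blockMap (T : Matrix m m R →ₗ[R] Matrix m' m' R) (n : Type*) :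
    Matrix (m × n) (m × n) R →ₗ[R] Matrix (m' × n) (m' × n) R where
  toFun M := of fun p q => T (M.submatrix (·, p.2) (·, q.2)) p.1 q.1
  map_add' M N := by ext; simp [submatrix_add]
  map_smul' c M := by ext; simp [submatrix_smul]

theorem blockMap_kronecker (T : Matrix m m R →ₗ[R] Matrix m' m' R) (X : Matrix m m R)
    (K : Matrix n n R) : blockMap T n (X ⊗ₖ K) = T X ⊗ₖ K := by
  ext ⟨i, a⟩ ⟨j, b⟩
  simp [blockMap, submatrix_kronecker, mul_comm]

end BlockMatrix

section Choi

variable {R m n p q : Type*} [CommSemiring R]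

theorem Matrix.star_vec_dotProduct_kronecker_mulVec_vec_s6 [StarRing R] [Fintype p] [Fintype q]
    (Y : Matrix p p R) (K : Matrix q q R) (W : Matrix q p R) :
    star (vec W) ⬝ᵥ (Y ⊗ₖ K) *ᵥ vec W = trace (Wᴴ * K * W * Yᵀ) := by
  rw [kronecker_mulVec_vec, star_vec_dotProduct_vec, Matrix.mul_assoc, Matrix.mul_assoc,
    Matrix.mul_assoc]

def choiFunctional [StarRing R] [Fintype n] [DecidableEq n] (T : Matrix m m R →ₗ[R] Matrix n n R) :
    Matrix (m × n) (m × n) R →ₗ[R] R where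
  toFun M := star (vec (1 : Matrix n n R)) ⬝ᵥ blockMap T n M *ᵥ vec 1
  map_add' M N := by simp [add_mulVec, dotProduct_add]
  map_smul' c M := by simp [smul_mulVec]

theorem choiFunctional_kronecker_single [StarRing R] [Fintype n] [DecidableEq n]
    (T : Matrix m m R →ₗ[R] Matrix n n R) (X : Matrix m m R) (k l : n) :
    choiFunctional T (X ⊗ₖ single k l 1) = T X k l := by
  simp [choiFunctional, blockMap_kronecker, star_vec_dotProduct_kronecker_mulVec_vec_s6,
    trace_single_mul]

variable [DecidableEq n]

def mapOfFunctional (ψ : Matrix (m × n) (m × n) R →ₗ[R] R) : Matrix m m R →ₗ[R] Matrix n n R where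
  toFun X := of fun k l => ψ (X ⊗ₖ single k l 1)
  map_add' X Y := by ext; simp [add_kronecker]
  map_smul' c X := by ext; simp [smul_kronecker]

theorem mapOfFunctional_apply (ψ : Matrix (m × n) (m × n) R →ₗ[R] R) (X : Matrix m m R) (k l : n) :
    mapOfFunctional ψ X k l = ψ (X ⊗ₖ single k l 1) := rfl

variable [Fintype n]

theorem Matrix.kronecker_eq_sum_smul_kronecker_single (X : Matrix m m R) (C : Matrix n n R) :
    X ⊗ₖ C = ∑ k, ∑ l, C k l • (X ⊗ₖ single k l 1) := by
  ext ⟨i, a⟩ ⟨j, b⟩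
  simp [Matrix.sum_apply, single_apply, ite_and, mul_comm]

theorem apply_kronecker_eq_trace_mapOfFunctional (ψ : Matrix (m × n) (m × n) R →ₗ[R] R)
    (X : Matrix m m R) (C : Matrix n n R) : ψ (X ⊗ₖ C) = trace (C * (mapOfFunctional ψ X)ᵀ) := by
  rw [kronecker_eq_sum_smul_kronecker_single]
  simp [trace, mul_apply, mapOfFunctional_apply]

end Choi

section CompletePositivity

variable {ι : Type*} [Fintype ι] [DecidableEq ι]

theorem Matrix.posSemidef_iff_forall_dotProduct_mulVec_nonneg {M : Matrix ι ι ℂ} :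
    M.PosSemidef ↔ ∀ x, 0 ≤ star x ⬝ᵥ M *ᵥ x := by
  rw [← isPositive_toEuclideanLin_iff, LinearMap.isPositive_iff_complex]
  simp_rw [EuclideanSpace.inner_eq_star_dotProduct, Matrix.ofLp_toLpLin, Matrix.toLin'_apply]
  refine (EuclideanSpace.equiv ι ℂ).forall_congr' fun x ↦ ?_
  have hstar : x ⬝ᵥ star (M *ᵥ x) = star (star x ⬝ᵥ M *ᵥ x) := by
    rw [dotProduct_star, dotProduct_comm]
  simp [Complex.nonneg_iff, Complex.ext_iff, hstar, eq_comm, and_comm]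

theorem Matrix.conjTranspose_one_kronecker_mul_kronecker_mul_s6 {R m p q : Type*} [CommSemiring R]
    [StarRing R] [Fintype m] [DecidableEq m] [Fintype q] (X : Matrix m m R) (K : Matrix q q R)
    (W : Matrix q p R) :
    -- without the ascriptions on `1`, these products elaborate with the `CStarMatrix` instance
    ((1 : Matrix m m R) ⊗ₖ W)ᴴ * (X ⊗ₖ K) * ((1 : Matrix m m R) ⊗ₖ W) = X ⊗ₖ (Wᴴ * K * W) := by
  rw [conjTranspose_kronecker, conjTranspose_one, ← mul_kronecker_mul, ← mul_kronecker_mul,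
    Matrix.one_mul, Matrix.mul_one]

theorem isCP_mapOfFunctional {d d' : ℕ} (ψ : Matrix (Fin d × Fin d') (Fin d × Fin d') ℂ →ₗ[ℂ] ℂ)
    (hψ : ∀ M, M.PosSemidef → 0 ≤ ψ M) : IsCP (mapOfFunctional ψ) := by
  intro n m X K hM
  rw [posSemidef_iff_forall_dotProduct_mulVec_nonneg]
  intro w
  obtain ⟨W, rfl⟩ : ∃ W : Matrix (Fin n) (Fin d') ℂ, vec W = w := ⟨of fun a k => w (k, a), rfl⟩
  have hquad : star (vec W) ⬝ᵥ (∑ j, mapOfFunctional ψ (X j) ⊗ₖ K j) *ᵥ vec W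
      = ψ (((1 : Mat d) ⊗ₖ W)ᴴ * (∑ j, X j ⊗ₖ K j) * ((1 : Mat d) ⊗ₖ W)) := by
    simp only [sum_mulVec, dotProduct_sum, Matrix.sum_mul, Matrix.mul_sum, map_sum,
      star_vec_dotProduct_kronecker_mulVec_vec_s6, conjTranspose_one_kronecker_mul_kronecker_mul_s6,
      apply_kronecker_eq_trace_mapOfFunctional]
  rw [hquad]
  exact hψ _ (hM.conjTranspose_mul_mul_same _)

theorem IsCPOn.posSemidef_blockMap {d d' n : ℕ} {S : Submodule ℂ (Mat d)} {T : S →ₗ[ℂ] Mat d'}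
    (hT : IsCPOn S T) {T₀ : Mat d →ₗ[ℂ] Mat d'} (hT₀ : T₀ ∘ₗ S.subtype = T)
    {M : Matrix (Fin d × Fin n) (Fin d × Fin n) ℂ} (hMS : M ∈ blockSubmodule S (Fin n))
    (hM : M.PosSemidef) : (blockMap T₀ (Fin n) M).PosSemidef := by
  let e : Fin n × Fin n ≃ Fin (n * n) := finProdFinEquiv
  have hsum {β : Type} [AddCommMonoid β] (F : Fin n → Fin n → β) :
      ∑ j, F (e.symm j).1 (e.symm j).2 = ∑ k, ∑ l, F k l := by
    rw [e.symm.sum_comp (fun p => F p.1 p.2), Fintype.sum_prod_type]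
  let X : Fin (n * n) → S := fun j => ⟨_, hMS (e.symm j).1 (e.symm j).2⟩
  let K : Fin (n * n) → Matrix (Fin n) (Fin n) ℂ := fun j => single (e.symm j).1 (e.symm j).2 1
  have hX : ∑ j, (X j : Mat d) ⊗ₖ K j = M :=
    (hsum fun k l => M.submatrix (·, k) (·, l) ⊗ₖ single k l 1).trans
      (sum_kronecker_single_submatrix M)
  have hTX : ∑ j, T (X j) ⊗ₖ K j = blockMap T₀ (Fin n) M := by
    conv_rhs => rw [← hX]
    simp [← hT₀, blockMap_kronecker]
  exact hTX ▸ hT n (n * n) X K (hX ▸ hM)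

end CompletePositivity

/-- Arveson-type extension theorem: a completely positive map on a Hermitian subspace
containing a positive definite matrix extends to a completely positive map on `M_d`. -/
theorem stmt6 {d d' : ℕ} (S : Submodule ℂ (Mat d))
    (hherm : ∀ X ∈ S, Xᴴ ∈ S)
    (P : Mat d) (hP : P.PosDef) (hPS : P ∈ S)
    (T : S →ₗ[ℂ] Mat d') (hT : IsCPOn S T) :
    ∃ T' : Mat d →ₗ[ℂ] Mat d', IsCP T' ∧ ∀ X (hX : X ∈ S), T' X = T ⟨X, hX⟩ := by
  obtain ⟨T₀, hT₀⟩ := LinearMap.exists_extend T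
  obtain ⟨ψ, hψT₀, hψ⟩ := exists_nonneg_extension (V := blockSubmodule S (Fin d'))
    (f := choiFunctional T₀) (fun M hM => conjTranspose_mem_blockSubmodule hherm hM)
    (hP.kronecker PosDef.one).isStrictlyPositive (kronecker_mem_blockSubmodule hPS 1)
    fun M hMS hM =>
      (hT.posSemidef_blockMap hT₀ hMS (nonneg_iff_posSemidef.mp hM)).dotProduct_mulVec_nonneg _
  refine ⟨mapOfFunctional ψ, isCP_mapOfFunctional ψ fun M hM => hψ M hM.nonneg, fun X hX => ?_⟩
  ext k l
  rw [mapOfFunctional_apply, hψT₀ _ (kronecker_mem_blockSubmodule hX _),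
    choiFunctional_kronecker_single, ← hT₀]
  rfl
end

section
/- Let S ⊂ M_d be a Hermitian subspace containing no positive semidefinite element other than 0, and let T : S → M_{d'} be a Hermiticity-preserving linear map. Then there exists a completely positive linear map T̃ : M_d → M_{d'} with T̃(X) = T(X) for all X ∈ S. -/
/-
Extend `T` linearly to `M_d` and average it with `X ↦ T(X†)†` to get a Hermiticity-preserving
`T₁` that still agrees with `T` on `S`; its Choi matrix is Hermitian. Since `S` meets the compact
convex set of density matrices trivially, Hahn–Banach yields a Hermitian functional `φ` vanishing
on `S` and strictly positive on nonzero positive semidefinite matrices. The Choi matrix of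
`X ↦ φ(X) • 1` is then `G ⊗ 1` with `G = (φ(E_ij))` positive definite, so for `c` large the Choi
matrix of `T₁ + c φ(·) 1` is positive semidefinite. That map agrees with `T` on `S`, and a positive
semidefinite Choi matrix `B† B` yields a Kraus decomposition, hence complete positivity.
-/
open scoped Kronecker ComplexOrder Matrix.Norms.L2Operator
open Matrix Filter Classical

open scoped MatrixOrder ComplexStarModule

lemma IsSelfAdjoint.exists_nonneg_add_smul {A : Type*} [CStarAlgebra A] [PartialOrder A]
    [StarOrderedRing A] {a b : A} (ha : IsSelfAdjoint a) (hb : IsStrictlyPositive b) :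
    ∃ c : ℝ, 0 ≤ a + c • b := by
  nontriviality A
  obtain ⟨r, hr, hrb⟩ := (CFC.exists_pos_algebraMap_le_iff hb.isSelfAdjoint).2
    fun x hx => hb.spectrum_pos hx
  refine ⟨‖a‖ / r, ?_⟩
  calc (0 : A) = -algebraMap ℝ A ‖a‖ + (‖a‖ / r) • algebraMap ℝ A r := by
        rw [Algebra.smul_def, ← map_mul, div_mul_cancel₀ _ hr.ne', neg_add_cancel]
    _ ≤ a + (‖a‖ / r) • b := add_le_add ha.neg_algebraMap_norm_le_self
        (smul_le_smul_of_nonneg_left hrb (by positivity))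

namespace LinearMap

lemma eq_zero_of_forall_lt_re {E : Type*} [AddCommGroup E] [Module ℂ E] (f : E →ₗ[ℂ] ℂ)
    (S : Submodule ℂ E) {v : ℝ} (hv : ∀ x ∈ S, v < (f x).re) {x : E} (hx : x ∈ S) :
    f x = 0 := by
  have hre : ∀ y ∈ S, (f y).re = 0 := fun y hy => by
    by_contra hne
    have := hv (((v - 1) / (f y).re : ℝ) • y) (S.smul_of_tower_mem _ hy)
    rw [← Complex.coe_smul, map_smul, smul_eq_mul, Complex.re_ofReal_mul,
      div_mul_cancel₀ _ hne] at this
    linarith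
  apply Complex.ext (hre x hx)
  simpa using hre _ (S.smul_mem Complex.I hx)

variable {E F : Type*} [AddCommGroup E] [Module ℂ E] [StarAddMonoid E] [StarModule ℂ E]
  [AddCommGroup F] [Module ℂ F] [StarAddMonoid F] [StarModule ℂ F]

lemma realPart_toConv_apply (f : E →ₗ[ℂ] F) (x : E) :
    (ℜ (WithConv.toConv f) : WithConv (E →ₗ[ℂ] F)).ofConv x =
      (2⁻¹ : ℝ) • (f x + star (f (star x))) := by
  simp [realPart_apply_coe]

lemma realPart_toConv_map_star (f : E →ₗ[ℂ] F) (x : E) :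
    (ℜ (WithConv.toConv f) : WithConv (E →ₗ[ℂ] F)).ofConv (star x) =
      star ((ℜ (WithConv.toConv f) : WithConv (E →ₗ[ℂ] F)).ofConv x) :=
  (IntrinsicStar.isSelfAdjoint_iff_map_star _).mp (ℜ (WithConv.toConv f)).2 x

theorem exists_extend_map_star {S : Submodule ℂ E} (hS : ∀ x ∈ S, star x ∈ S) (T : S →ₗ[ℂ] F)
    (hT : ∀ x (hx : x ∈ S), T ⟨star x, hS x hx⟩ = star (T ⟨x, hx⟩)) :
    ∃ T' : E →ₗ[ℂ] F, (∀ x, T' (star x) = star (T' x)) ∧ ∀ x (hx : x ∈ S), T' x = T ⟨x, hx⟩ := by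
  obtain ⟨T₀, hT₀⟩ := T.exists_extend
  have hT₀S : ∀ x (hx : x ∈ S), T₀ x = T ⟨x, hx⟩ := fun x hx => congr($hT₀ ⟨x, hx⟩)
  refine ⟨(ℜ (WithConv.toConv T₀) : WithConv (E →ₗ[ℂ] F)).ofConv, realPart_toConv_map_star T₀,
    fun x hx => ?_⟩
  rw [realPart_toConv_apply, hT₀S x hx, hT₀S _ (hS x hx), hT x hx, star_star, ← two_smul ℝ,
    smul_smul]
  norm_num

end LinearMap

namespace Matrix

section DensityMatrices

variable {n : Type*} [Fintype n] [DecidableEq n]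

lemma le_algebraMap_re_trace_of_nonneg {P : Matrix n n ℂ} (hP : 0 ≤ P) :
    P ≤ algebraMap ℝ _ P.trace.re := by
  have hH : P.IsHermitian := hP.posSemidef.isHermitian
  rw [le_algebraMap_iff_spectrum_le hH.isSelfAdjoint, hH.spectrum_real_eq_range_eigenvalues]
  rintro _ ⟨i, rfl⟩
  rw [hH.trace_eq_sum_eigenvalues, Complex.re_sum]
  simp only [Complex.coe_algebraMap, Complex.ofReal_re]
  exact Finset.single_le_sum (fun j _ => hP.posSemidef.eigenvalues_nonneg j) (Finset.mem_univ i)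

lemma norm_le_re_trace_of_nonneg {P : Matrix n n ℂ} (hP : 0 ≤ P) : ‖P‖ ≤ P.trace.re :=
  (CStarAlgebra.norm_le_iff_le_algebraMap P
    (Complex.nonneg_iff.mp hP.posSemidef.trace_nonneg).1 hP).mpr
    (le_algebraMap_re_trace_of_nonneg hP)

def densityMatrices (n : Type*) [Fintype n] : Set (Matrix n n ℂ) := {P | 0 ≤ P ∧ P.trace = 1}

lemma convex_densityMatrices : Convex ℝ (densityMatrices n) := by
  rintro P ⟨hP, hPt⟩ Q ⟨hQ, hQt⟩ a b ha hb hab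
  refine ⟨add_nonneg (smul_nonneg ha hP) (smul_nonneg hb hQ), ?_⟩
  rw [trace_add, trace_smul, trace_smul, hPt, hQt, ← add_smul, hab, one_smul]

lemma isCompact_densityMatrices : IsCompact (densityMatrices n) := by
  refine Metric.isCompact_of_isClosed_isBounded ?_
    ((Metric.isBounded_closedBall (x := 0) (r := 1)).subset ?_)
  · exact CStarAlgebra.isClosed_nonneg.inter
      (isClosed_eq continuous_id.matrix_trace continuous_const)
  · rintro P ⟨hP, hPt⟩
    simpa [hPt] using norm_le_re_trace_of_nonneg hP

theorem exists_functional_re_neg_of_forall_nonneg_eq_zero (S : Submodule ℂ (Matrix n n ℂ))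
    (hS : ∀ X ∈ S, 0 ≤ X → X = 0) :
    ∃ f : Matrix n n ℂ →ₗ[ℂ] ℂ, (∀ X ∈ S, f X = 0) ∧ ∀ P ∈ densityMatrices n, (f P).re < 0 := by
  have hdisj : Disjoint (densityMatrices n) S := by
    refine Set.disjoint_left.mpr fun P ⟨hP, hPt⟩ hPS => ?_
    simp [hS P hPS hP] at hPt
  obtain ⟨f, u, v, hfs, huv, hft⟩ := RCLike.geometric_hahn_banach_compact_closed (𝕜 := ℂ)
    convex_densityMatrices isCompact_densityMatrices (S.restrictScalars ℝ).convex
    S.closed_of_finiteDimensional hdisj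
  have hv : v < 0 := by simpa using hft 0 S.zero_mem
  exact ⟨f, fun X hX => f.toLinearMap.eq_zero_of_forall_lt_re S hft hX,
    fun P hP => (hfs P hP).trans (huv.trans hv)⟩

theorem exists_functional_pos_of_forall_nonneg_eq_zero {S : Submodule ℂ (Matrix n n ℂ)}
    (hS : ∀ X ∈ S, star X ∈ S) (hnonneg : ∀ X ∈ S, 0 ≤ X → X = 0) :
    ∃ φ : Matrix n n ℂ →ₗ[ℂ] ℂ, (∀ X ∈ S, φ X = 0) ∧ (∀ X, φ (star X) = star (φ X)) ∧
      ∀ P, 0 ≤ P → P ≠ 0 → 0 < φ P := by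
  obtain ⟨f, hfS, hfneg⟩ := exists_functional_re_neg_of_forall_nonneg_eq_zero S hnonneg
  set φ := -(ℜ (WithConv.toConv f) : WithConv (Matrix n n ℂ →ₗ[ℂ] ℂ)).ofConv
  have hφ : ∀ X, φ X = -((2⁻¹ : ℝ) • (f X + star (f (star X)))) := fun X => by
    simp only [φ, LinearMap.neg_apply, f.realPart_toConv_apply]
  have hdensity : ∀ Q ∈ densityMatrices n, 0 < φ Q := fun Q hQ => by
    have hφQ : φ Q = ((-(f Q).re : ℝ) : ℂ) := by
      rw [hφ, (IsSelfAdjoint.of_nonneg hQ.1).star_eq, Complex.star_def, Complex.add_conj,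
        Complex.real_smul]
      push_cast
      ring
    exact hφQ ▸ Complex.zero_lt_real.mpr (neg_pos.mpr (hfneg Q hQ))
  refine ⟨φ, fun X hX => by simp [hφ, hfS X hX, hfS _ (hS X hX)], fun X => by
    simp only [φ, LinearMap.neg_apply, f.realPart_toConv_map_star, star_neg], fun P hP hP0 => ?_⟩
  have htr : 0 < P.trace.re ∧ P.trace.im = 0 := by
    have h := hP.posSemidef.trace_nonneg.lt_of_ne
      (Ne.symm (hP.posSemidef.trace_eq_zero_iff.not.mpr hP0))
    simpa [eq_comm] using Complex.lt_def.mp h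
  have hPscale : P = P.trace.re • (P.trace.re⁻¹ • P) := by
    rw [smul_smul, mul_inv_cancel₀ htr.1.ne', one_smul]
  rw [hPscale, φ.map_smul_of_tower]
  refine smul_pos htr.1 (hdensity _ ⟨smul_nonneg (inv_nonneg.mpr htr.1.le) hP, ?_⟩)
  rw [trace_smul]
  exact Complex.ext (by simp [htr.1.ne']) (by simp [htr.2])

end DensityMatrices

section Choi

variable {m n : Type*} [DecidableEq m]

def choi : (Matrix m m ℂ →ₗ[ℂ] Matrix n n ℂ) →ₗ[ℂ] Matrix (m × n) (m × n) ℂ where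
  toFun Φ := of fun p q => Φ (single p.1 q.1 1) p.2 q.2
  map_add' _ _ := rfl
  map_smul' _ _ := rfl

@[simp]
lemma choi_apply (Φ : Matrix m m ℂ →ₗ[ℂ] Matrix n n ℂ) (i j : m) (a b : n) :
    choi Φ (i, a) (j, b) = Φ (single i j 1) a b := rfl

lemma isHermitian_choi_of_map_star {Φ : Matrix m m ℂ →ₗ[ℂ] Matrix n n ℂ}
    (hΦ : ∀ X, Φ (star X) = star (Φ X)) : (choi Φ).IsHermitian := by
  ext ⟨i, a⟩ ⟨j, b⟩
  rw [conjTranspose_apply, choi_apply, choi_apply, ← conjTranspose_apply, ← star_eq_conjTranspose,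
    ← hΦ, star_eq_conjTranspose, conjTranspose_single, star_one]

variable [Fintype m] [Fintype n]

lemma _root_.LinearMap.apply_eq_sum_single {M : Type*} [AddCommMonoid M] [Module ℂ M]
    (Φ : Matrix m m ℂ →ₗ[ℂ] M) (X : Matrix m m ℂ) :
    Φ X = ∑ i, ∑ j, X i j • Φ (single i j 1) := by
  conv_lhs => rw [matrix_eq_sum_single X]
  simp [map_sum, ← map_smul, smul_single]

/-- The rows of `B`, reshaped to `m × n` matrices, are Kraus operators of `Φ`. -/
lemma eq_sum_conjTranspose_mul_mul_of_choi_eq {Φ : Matrix m m ℂ →ₗ[ℂ] Matrix n n ℂ}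
    {B : Matrix (m × n) (m × n) ℂ} (hB : choi Φ = Bᴴ * B) (X : Matrix m m ℂ) :
    Φ X = ∑ k, (of fun i a => B k (i, a))ᴴ * X * of fun i a => B k (i, a) := by
  ext a b
  have hC : ∀ i j, Φ (single i j 1) a b = ∑ k, star (B k (i, a)) * B k (j, b) := fun i j => by
    rw [← choi_apply, hB, mul_apply]; rfl
  simp only [Φ.apply_eq_sum_single X, sum_apply, smul_apply, hC, mul_apply, conjTranspose_apply,
    of_apply, smul_eq_mul, Finset.mul_sum, Finset.sum_mul]
  simp_rw [Finset.sum_comm (s := (Finset.univ : Finset m)) (t := (Finset.univ : Finset (m × n)))]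
  refine Finset.sum_congr rfl fun k _ => ?_
  rw [Finset.sum_comm]
  exact Finset.sum_congr rfl fun j _ => Finset.sum_congr rfl fun i _ => by ring

lemma posDef_choi_smulRight_one [DecidableEq n] {φ : Matrix m m ℂ →ₗ[ℂ] ℂ}
    (hφ : ∀ X, φ (star X) = star (φ X)) (hpos : ∀ P, 0 ≤ P → P ≠ 0 → 0 < φ P) :
    (choi (φ.smulRight (1 : Matrix n n ℂ))).PosDef := by
  have hG : (of fun i j => φ (single i j 1)).PosDef := by
    refine PosDef.of_dotProduct_mulVec_pos ?_ fun v hv => ?_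
    · ext i j
      simp [← hφ, star_eq_conjTranspose]
    · have hquad : star v ⬝ᵥ (of fun i j => φ (single i j 1)) *ᵥ v =
          φ (vecMulVec (star v) v) := by
        simp [φ.apply_eq_sum_single (vecMulVec (star v) v), dotProduct, mulVec, vecMulVec_apply,
          Finset.mul_sum, mul_assoc, mul_left_comm, mul_comm]
      obtain ⟨i, hi⟩ := Function.ne_iff.mp hv
      refine hquad ▸ hpos _ (posSemidef_vecMulVec_star_self v).nonneg fun h => hi ?_
      simpa [vecMulVec_apply] using congr_fun (congr_fun h i) i
  have hchoi : choi (φ.smulRight (1 : Matrix n n ℂ)) = (of fun i j => φ (single i j 1)) ⊗ₖ 1 := by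
    ext ⟨i, a⟩ ⟨j, b⟩
    simp
  exact hchoi ▸ hG.kronecker PosDef.one

end Choi

lemma sum_kronecker {ι l m n p α : Type*} [NonUnitalNonAssocSemiring α] (s : Finset ι)
    (A : ι → Matrix l m α) (B : Matrix n p α) : (∑ k ∈ s, A k) ⊗ₖ B = ∑ k ∈ s, A k ⊗ₖ B := by
  ext ⟨i, a⟩ ⟨j, b⟩
  simp [sum_apply, Finset.sum_mul]

end Matrix

lemma isCP_of_eq_sum_conjTranspose_mul_mul {d d' : ℕ} {ι : Type*} [Fintype ι]
    {Φ : Mat d →ₗ[ℂ] Mat d'} (K : ι → Matrix (Fin d) (Fin d') ℂ)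
    (hΦ : ∀ X, Φ X = ∑ k, (K k)ᴴ * X * K k) : IsCP Φ := by
  intro n m X L hP
  have hconj : ∀ k, (K k ⊗ₖ (1 : Matrix (Fin n) (Fin n) ℂ))ᴴ * (∑ j, X j ⊗ₖ L j) *
      (K k ⊗ₖ (1 : Matrix (Fin n) (Fin n) ℂ)) = ∑ j, ((K k)ᴴ * X j * K k) ⊗ₖ L j := fun k => by
    rw [conjTranspose_kronecker, conjTranspose_one, Matrix.mul_sum, Matrix.sum_mul]
    simp only [← mul_kronecker_mul, one_mul, mul_one]
  have hsum : ∑ j, Φ (X j) ⊗ₖ L j = ∑ k, (K k ⊗ₖ (1 : Matrix (Fin n) (Fin n) ℂ))ᴴ *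
      (∑ j, X j ⊗ₖ L j) * (K k ⊗ₖ (1 : Matrix (Fin n) (Fin n) ℂ)) := by
    simp only [hconj, hΦ, sum_kronecker]
    exact Finset.sum_comm
  rw [hsum]
  exact posSemidef_sum _ fun k _ => hP.conjTranspose_mul_mul_same _

lemma isCP_of_posSemidef_choi {d d' : ℕ} {Φ : Mat d →ₗ[ℂ] Mat d'} (h : (choi Φ).PosSemidef) :
    IsCP Φ := by
  obtain ⟨B, hB⟩ := CStarAlgebra.nonneg_iff_eq_star_mul_self.mp h.nonneg
  exact isCP_of_eq_sum_conjTranspose_mul_mul _ (eq_sum_conjTranspose_mul_mul_of_choi_eq hB)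

/-- A Hermiticity-preserving linear map on a Hermitian subspace containing no nonzero
positive semidefinite element extends to a completely positive map on `M_d`. -/
theorem stmt8 {d d' : ℕ} (S : Submodule ℂ (Mat d))
    (hherm : ∀ X ∈ S, Xᴴ ∈ S)
    (hnopos : ∀ X ∈ S, Matrix.PosSemidef X → X = 0)
    (T : S →ₗ[ℂ] Mat d')
    (hT : ∀ X (hX : X ∈ S), T ⟨Xᴴ, hherm X hX⟩ = (T ⟨X, hX⟩)ᴴ) :
    ∃ T' : Mat d →ₗ[ℂ] Mat d', IsCP T' ∧ ∀ X (hX : X ∈ S), T' X = T ⟨X, hX⟩ := by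
  obtain ⟨T₁, hT₁star, hT₁S⟩ := LinearMap.exists_extend_map_star hherm T hT
  obtain ⟨φ, hφS, hφstar, hφpos⟩ := exists_functional_pos_of_forall_nonneg_eq_zero hherm
    fun X hX hX0 => hnopos X hX hX0.posSemidef
  obtain ⟨c, hc⟩ := (isHermitian_choi_of_map_star hT₁star).isSelfAdjoint.exists_nonneg_add_smul
    (posDef_choi_smulRight_one (n := Fin d') hφstar hφpos).isStrictlyPositive
  refine ⟨T₁ + (c : ℂ) • φ.smulRight 1, isCP_of_posSemidef_choi ?_, fun X hX => ?_⟩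
  · rw [map_add, map_smul, Complex.coe_smul]
    exact hc.posSemidef
  · simp [hT₁S X hX, hφS X hX]
end

section
/- Let Ψ₀ = [[1,0],[0,0]], σ_x = [[0,1],[1,0]] and σ_z = [[1,0],[0,-1]] in M_2. There is no completely positive linear map T̃ : M_2 → M_2 with T̃(Ψ₀) = Ψ₀ and T̃(σ_x) = σ_z; in fact, there is not even a positive linear map T̃ : M_2 → M_2 (i.e., mapping positive semidefinite matrices to positive semidefinite matrices) satisfying these two conditions. -/
open scoped Kronecker ComplexOrder Matrix.Norms.L2Operator
open Matrix Filter Classical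

def matPsi0 : Mat 2 := !![1, 0; 0, 0]
def pauliX : Mat 2 := !![0, 1; 1, 0]
def pauliY : Mat 2 := !![0, -Complex.I; Complex.I, 0]
def pauliZ : Mat 2 := !![1, 0; 0, -1]

/-!
A positive map `T` with `T Ψ₀ = Ψ₀` and `T σₓ = σ_z` sends the positive rank-one matrix
`[[1, t], [t, t²]] = (1 - t²) Ψ₀ + t σₓ + t² 1` to `(1 - t²) Ψ₀ + t σ_z + t² T(1)`, whose
lower-right entry `t² b - t`, with `b = T(1)₂₂ ≥ 0`, must be nonnegative; it is negative as soon
as `0 < t < 1 / b`. Complete positivity implies positivity (take `n = 1`).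
-/

lemma kronecker_one_fin_one_posSemidef_iff {d : ℕ} (M : Mat d) :
    (M ⊗ₖ (1 : Matrix (Fin 1) (Fin 1) ℂ)).PosSemidef ↔ M.PosSemidef := by
  have h : M ⊗ₖ (1 : Matrix (Fin 1) (Fin 1) ℂ) =
      M.submatrix (Equiv.prodUnique (Fin d) (Fin 1)) (Equiv.prodUnique (Fin d) (Fin 1)) := by
    ext ⟨i, j⟩ ⟨k, l⟩
    simp [Subsingleton.elim j l]
  rw [h]
  exact posSemidef_submatrix_equiv _

lemma IsCP.posSemidef_apply {d d' : ℕ} {T : Mat d →ₗ[ℂ] Mat d'} (hT : IsCP T) {A : Mat d}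
    (hA : A.PosSemidef) : (T A).PosSemidef := by
  have h := hT 1 1 ![A] ![1] (by simpa [kronecker_one_fin_one_posSemidef_iff] using hA)
  simpa [kronecker_one_fin_one_posSemidef_iff] using h

lemma vecMulVec_one_self_eq (t : ℂ) :
    vecMulVec ![1, t] ![1, t] = (1 - t ^ 2) • matPsi0 + t • pauliX + t ^ 2 • (1 : Mat 2) := by
  ext i j
  fin_cases i <;> fin_cases j <;> simp [vecMulVec, matPsi0, pauliX]
  ring

lemma le_sq_mul_apply_one_one_of_posMap {T : Mat 2 →ₗ[ℂ] Mat 2}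
    (hT : ∀ A : Mat 2, A.PosSemidef → (T A).PosSemidef)
    (h0 : T matPsi0 = matPsi0) (hx : T pauliX = pauliZ) (t : ℝ) :
    (t : ℂ) ≤ t ^ 2 * T 1 1 1 := by
  have hv : (vecMulVec ![1, (t : ℂ)] (star ![1, (t : ℂ)])).PosSemidef :=
    posSemidef_vecMulVec_self_star _
  have hstar : star ![1, (t : ℂ)] = ![1, (t : ℂ)] := by
    ext i; fin_cases i <;> simp
  rw [hstar, vecMulVec_one_self_eq] at hv
  have h11 := (hT _ hv).diag_nonneg (i := 1)
  simp only [map_add, map_smul, h0, hx] at h11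
  simpa [matPsi0, pauliZ, sub_nonneg, add_comm] using h11

lemma not_exists_posMap_matPsi0_pauliX_pauliZ :
    ¬ ∃ T : Mat 2 →ₗ[ℂ] Mat 2, (∀ A : Mat 2, A.PosSemidef → (T A).PosSemidef) ∧
        T matPsi0 = matPsi0 ∧ T pauliX = pauliZ := by
  rintro ⟨T, hT, h0, hx⟩
  have hb : 0 ≤ T 1 1 1 := (hT 1 PosSemidef.one).diag_nonneg
  set b := (T 1 1 1).re
  have hbT : T 1 1 1 = b := Complex.eq_re_of_ofReal_le (r := 0) (by rwa [Complex.ofReal_zero])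
  have hb0 : 0 ≤ b := by simpa [hbT] using hb
  have key : (b + 1)⁻¹ ≤ (b + 1)⁻¹ ^ 2 * b := by
    have := le_sq_mul_apply_one_one_of_posMap hT h0 hx (b + 1)⁻¹
    rwa [hbT, ← Complex.ofReal_pow, ← Complex.ofReal_mul, Complex.real_le_real] at this
  field_simp at key
  linarith

/-- There is no completely positive — indeed not even a positive — linear map on `M_2`
with `Ψ₀ ↦ Ψ₀` and `σ_x ↦ σ_z`. -/
theorem stmt10 :
    (¬ ∃ T : Mat 2 →ₗ[ℂ] Mat 2, IsCP T ∧ T matPsi0 = matPsi0 ∧ T pauliX = pauliZ) ∧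
    (¬ ∃ T : Mat 2 →ₗ[ℂ] Mat 2, (∀ A : Mat 2, A.PosSemidef → (T A).PosSemidef) ∧
        T matPsi0 = matPsi0 ∧ T pauliX = pauliZ) := by
  refine ⟨?_, not_exists_posMap_matPsi0_pauliX_pauliZ⟩
  rintro ⟨T, hT, h0, hx⟩
  exact not_exists_posMap_matPsi0_pauliX_pauliZ ⟨T, fun _ ↦ hT.posSemidef_apply, h0, hx⟩
end

section
/- Let p = 14/15, ρ = diag(p, 1−p) ∈ M_2, σ_y = [[0,−i],[i,0]], and K = (1/2)·[[3p−1, 2],[2, 3p+2]] ∈ M_2 (which is positive definite), with positive square root K^{1/2}. The linear map T(X) := K^{1/2} X K^{1/2} restricted to S = span{ρ, σ_y} is completely positive and trace-preserving on S (i.e., tr[T(X)] = tr[X] for all X ∈ S); yet there is no positive trace-preserving linear map T̃ : M_2 → M_2 with T̃(ρ) = K^{1/2} ρ K^{1/2} and T̃(σ_y) = K^{1/2} σ_y K^{1/2}. -/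
open scoped Kronecker ComplexOrder Matrix.Norms.L2Operator
open Matrix Filter Classical

/-- The positive semidefinite square root of a positive semidefinite matrix
(junk value `0` on other matrices). -/
noncomputable def msqrt {n : ℕ} (A : Matrix (Fin n) (Fin n) ℂ) : Matrix (Fin n) (Fin n) ℂ :=
  if h : A.PosSemidef then
    h.1.eigenvectorUnitary.1 * diagonal ((↑) ∘ (Real.sqrt ·) ∘ h.1.eigenvalues) *
      (star h.1.eigenvectorUnitary : Matrix (Fin n) (Fin n) ℂ)
  else 0

noncomputable def rho11 : Mat 2 := !![14/15, 0; 0, 1 - 14/15]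

noncomputable def K11 : Mat 2 := (1/2 : ℂ) • !![3*(14/15) - 1, 2; 2, 3*(14/15) + 2]

/-!
Congruence by `√K ⊗ 1` preserves positivity, which gives complete positivity on `S`, and
`tr (√K X √K) = tr (K X)` agrees with `tr X` on the two generators of `S`.

For the obstruction, `1 ± σ_y` are positive and `σ_y = ((1 + σ_y) - (1 - σ_y)) / 2`, so every
positive trace-preserving `Φ` on `M_2` satisfies `Re tr (Φ(σ_y) σ_y) ≤ tr (Φ 1) = 2`. On the other
hand `√K` is real symmetric and `σ_y Mᵀ σ_y` is the adjugate of `M`, so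
`tr (√K σ_y √K σ_y) = 2 det √K = 2 √(det K) = 2 √(29/25) > 2`.
-/

section

open scoped MatrixOrder

theorem msqrt_eq_cfcSqrt {n : ℕ} {A : Matrix (Fin n) (Fin n) ℂ} (hA : A.PosSemidef) :
    msqrt A = CFC.sqrt A := by
  rw [msqrt, dif_pos hA, CFC.sqrt_eq_cfc, cfc_nnreal_eq_real _ A hA.nonneg, hA.1.cfc_eq]
  simp only [IsHermitian.cfc, Unitary.conjStarAlgAut_apply, Real.coe_sqrt, Real.coe_toNNReal']
  congr 3
  funext i
  simp [max_eq_left (hA.eigenvalues_nonneg i)]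

theorem posSemidef_msqrt {n : ℕ} {A : Matrix (Fin n) (Fin n) ℂ} (hA : A.PosSemidef) :
    (msqrt A).PosSemidef := by
  rw [msqrt_eq_cfcSqrt hA]
  exact (CFC.sqrt_nonneg A).posSemidef

theorem msqrt_mul_self {n : ℕ} {A : Matrix (Fin n) (Fin n) ℂ} (hA : A.PosSemidef) :
    msqrt A * msqrt A = A := by
  rw [msqrt_eq_cfcSqrt hA]
  exact CFC.sqrt_mul_sqrt_self A hA.nonneg

theorem transpose_msqrt {n : ℕ} {A : Matrix (Fin n) (Fin n) ℂ} (hA : A.PosSemidef) :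
    (msqrt A)ᵀ = msqrt Aᵀ := by
  rw [msqrt_eq_cfcSqrt hA.transpose]
  refine (CFC.sqrt_unique ?_ (posSemidef_msqrt hA).transpose.nonneg).symm
  rw [← transpose_mul, msqrt_mul_self hA]

theorem Matrix.PosSemidef.trace_mul_nonneg {ι : Type*} [Fintype ι] [DecidableEq ι]
    {P Q : Matrix ι ι ℂ} (hP : P.PosSemidef) (hQ : Q.PosSemidef) : 0 ≤ (Q * P).trace := by
  obtain ⟨B, rfl⟩ := CStarAlgebra.nonneg_iff_eq_star_mul_self.mp hP.nonneg
  rw [← mul_assoc, trace_mul_cycle, star_eq_conjTranspose]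
  exact (hQ.mul_mul_conjTranspose_same B).trace_nonneg

end

theorem isCPOn_of_eq_mul_mul_conjTranspose {d d' : ℕ} (S : Submodule ℂ (Mat d))
    (T : S →ₗ[ℂ] Mat d') (A : Matrix (Fin d') (Fin d) ℂ)
    (hT : ∀ X : S, T X = A * (X : Mat d) * Aᴴ) : IsCPOn S T := by
  intro n m X K hP
  set A₁ := A ⊗ₖ (1 : Matrix (Fin n) (Fin n) ℂ)
  have hconj : ∑ j, T (X j) ⊗ₖ K j = A₁ * (∑ j, (X j : Mat d) ⊗ₖ K j) * A₁ᴴ := by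
    rw [Matrix.mul_sum, Matrix.sum_mul]
    refine Finset.sum_congr rfl fun j _ => ?_
    rw [hT, conjTranspose_kronecker, conjTranspose_one, ← mul_kronecker_mul, ← mul_kronecker_mul,
      one_mul, mul_one]
  rw [hconj]
  exact hP.mul_mul_conjTranspose_same _

section HermitianInvolution

variable {ι : Type*} [Fintype ι] [DecidableEq ι] {U : Matrix ι ι ℂ}

theorem posSemidef_one_add_of_involution (hU : Uᴴ = U) (hUU : U * U = 1) :
    (1 + U).PosSemidef := by
  have hsq : (1 + U)ᴴ * (1 + U) = (2 : ℝ) • (1 + U) := by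
    rw [conjTranspose_add, conjTranspose_one, hU, add_mul, mul_add, mul_add, hUU, two_smul]
    simp only [one_mul, mul_one]
    abel
  have h := (posSemidef_conjTranspose_mul_self (1 + U)).smul (by norm_num : (0 : ℝ) ≤ 1 / 2)
  rwa [hsq, smul_smul, one_div, inv_mul_cancel₀ two_ne_zero, one_smul] at h

theorem abs_re_trace_mul_le_of_involution (hU : Uᴴ = U) (hUU : U * U = 1) {Q : Matrix ι ι ℂ}
    (hQ : Q.PosSemidef) : |(Q * U).trace.re| ≤ Q.trace.re := by
  have hplus := (Complex.nonneg_iff.mp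
    ((posSemidef_one_add_of_involution hU hUU).trace_mul_nonneg hQ)).1
  have hminus := (Complex.nonneg_iff.mp
    ((posSemidef_one_add_of_involution (U := -U) (by rw [conjTranspose_neg, hU])
      (by rw [neg_mul_neg, hUU])).trace_mul_nonneg hQ)).1
  simp only [mul_add, mul_neg, mul_one, trace_add, trace_neg, Complex.add_re,
    Complex.neg_re] at hplus hminus
  exact abs_le.mpr ⟨by linarith, by linarith⟩

theorem re_trace_map_mul_le_card_of_involution (Φ : Matrix ι ι ℂ →ₗ[ℂ] Matrix ι ι ℂ)
    (hΦ : ∀ A, A.PosSemidef → (Φ A).PosSemidef) (htr : ∀ X, (Φ X).trace = X.trace)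
    (hU : Uᴴ = U) (hUU : U * U = 1) : (Φ U * U).trace.re ≤ Fintype.card ι := by
  have hplus := posSemidef_one_add_of_involution hU hUU
  have hminus := posSemidef_one_add_of_involution (U := -U) (by rw [conjTranspose_neg, hU])
    (by rw [neg_mul_neg, hUU])
  have hdecomp : (2 : ℂ) • Φ U = Φ (1 + U) - Φ (1 + -U) := by
    rw [← map_sub, ← map_smul, two_smul]
    congr 1
    abel
  have hbound : 2 * (Φ U * U).trace.re ≤ (Φ (1 + U)).trace.re + (Φ (1 + -U)).trace.re := by
    have h2 : 2 * (Φ U * U).trace.re = ((2 : ℂ) • Φ U * U).trace.re := by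
      simp [trace_smul]
    rw [h2, hdecomp, sub_mul, trace_sub, Complex.sub_re]
    have := abs_le.mp (abs_re_trace_mul_le_of_involution hU hUU (hΦ _ hplus))
    have := abs_le.mp (abs_re_trace_mul_le_of_involution hU hUU (hΦ _ hminus))
    linarith
  rw [htr, htr, trace_add, trace_add, trace_neg, trace_one] at hbound
  simp only [Complex.add_re, Complex.neg_re, Complex.natCast_re] at hbound
  linarith

end HermitianInvolution

theorem pauliY_conjTranspose : pauliYᴴ = pauliY := by
  ext i j
  fin_cases i <;> fin_cases j <;> simp [pauliY]

theorem pauliY_mul_self : pauliY * pauliY = 1 := by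
  ext i j
  fin_cases i <;> fin_cases j <;> simp [pauliY]

theorem trace_mul_pauliY_mul_transpose_mul_pauliY (M : Mat 2) :
    (M * pauliY * Mᵀ * pauliY).trace = 2 * M.det := by
  simp [pauliY, trace_fin_two, det_fin_two, mul_apply, Fin.sum_univ_two]
  ring_nf
  simp only [Complex.I_sq]
  ring

theorem K11_eq : K11 = !![9/10, 1; 1, 12/5] := by
  ext i j
  fin_cases i <;> fin_cases j <;> norm_num [K11]

theorem K11_eq_smul_one_add_vecMulVec :
    K11 = (2/5 : ℝ) • (1 : Mat 2) + (1/2 : ℝ) • vecMulVec ![1, 2] (star ![1, 2]) := by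
  rw [K11_eq]
  ext i j
  fin_cases i <;> fin_cases j <;> norm_num [vecMulVec, map_ofNat]

theorem K11_posDef : K11.PosDef := by
  rw [K11_eq_smul_one_add_vecMulVec]
  exact (PosDef.one.smul (by norm_num)).add_posSemidef
    ((posSemidef_vecMulVec_self_star _).smul (by norm_num))

theorem K11_transpose : K11ᵀ = K11 := by
  rw [K11_eq]
  ext i j
  fin_cases i <;> fin_cases j <;> rfl

theorem det_K11 : K11.det = 29/25 := by
  rw [K11_eq, det_fin_two_of]
  norm_num

theorem trace_K11_mul_of_mem_span {X : Mat 2} (hX : X ∈ Submodule.span ℂ {rho11, pauliY}) :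
    (K11 * X).trace = X.trace := by
  refine LinearMap.eqOn_span' (f := traceLinearMap _ ℂ ℂ ∘ₗ LinearMap.mulLeft ℂ K11)
    (g := traceLinearMap _ ℂ ℂ) ?_ hX
  rintro Y (rfl | rfl)
  · simp [K11_eq, rho11, trace_fin_two]
    norm_num
  · simp [K11_eq, pauliY, trace_fin_two]

theorem two_lt_re_trace_msqrt_K11_conj_pauliY :
    2 < (msqrt K11 * pauliY * msqrt K11 * pauliY).trace.re := by
  have hK := K11_posDef.posSemidef
  have hRt : (msqrt K11)ᵀ = msqrt K11 := by rw [transpose_msqrt hK, K11_transpose]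
  have hdet_sq : (msqrt K11).det ^ 2 = 29/25 := by
    rw [sq, ← det_mul, msqrt_mul_self hK, det_K11]
  obtain ⟨hre, him⟩ := Complex.nonneg_iff.mp (posSemidef_msqrt hK).det_nonneg
  have hre_sq : (msqrt K11).det.re ^ 2 = 29/25 := by
    simpa [sq, ← him] using congrArg Complex.re hdet_sq
  nth_rw 2 [← hRt]
  rw [trace_mul_pauliY_mul_transpose_mul_pauliY]
  simp only [Complex.mul_re, Complex.re_ofNat, Complex.im_ofNat, zero_mul, sub_zero]
  nlinarith

/-- With `p = 14/15`, `ρ = diag(p, 1-p)` and `K` as in the paper: `K` is positive definite,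
the map `X ↦ K^{1/2} X K^{1/2}` is completely positive and trace-preserving on
`S = span{ρ, σ_y}`, yet it has no positive trace-preserving extension to `M_2`. -/
theorem stmt11
    (S : Submodule ℂ (Mat 2)) (hS : S = Submodule.span ℂ {rho11, pauliY})
    (T : S →ₗ[ℂ] Mat 2)
    (hT : ∀ X (hX : X ∈ S), T ⟨X, hX⟩ = msqrt K11 * X * msqrt K11) :
    K11.PosDef ∧
    IsCPOn S T ∧
    (∀ X ∈ S, (msqrt K11 * X * msqrt K11).trace = X.trace) ∧
    ¬ ∃ T' : Mat 2 →ₗ[ℂ] Mat 2,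
        (∀ A : Mat 2, A.PosSemidef → (T' A).PosSemidef) ∧
        (∀ X : Mat 2, (T' X).trace = X.trace) ∧
        T' rho11 = msqrt K11 * rho11 * msqrt K11 ∧
        T' pauliY = msqrt K11 * pauliY * msqrt K11 := by
  have hK := K11_posDef.posSemidef
  refine ⟨K11_posDef, ?_, ?_, ?_⟩
  · refine isCPOn_of_eq_mul_mul_conjTranspose S T (msqrt K11) fun X => ?_
    rw [(posSemidef_msqrt hK).isHermitian.eq]
    exact hT X X.2
  · intro X hX
    rw [trace_mul_cycle, msqrt_mul_self hK]
    exact trace_K11_mul_of_mem_span (hS ▸ hX)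
  · rintro ⟨T', hpos, htr, -, hY⟩
    have hupper := re_trace_map_mul_le_card_of_involution T' hpos htr pauliY_conjTranspose
      pauliY_mul_self
    have hlower := two_lt_re_trace_msqrt_K11_conj_pauliY
    rw [hY, Fintype.card_fin] at hupper
    norm_num at hupper
    linarith
end
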